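/- arXiv:2605.19402 — 4 statements merged into one kernel-verified Lean document; each statement's English description precedes it below -/
import Mathlib

section
/- Let z be obtained from a string w ∈ {0,1}^* by either truncating w to its first n bits if |w| > n, or padding w with trailing zeros to length n if |w| ≤ n. Then for any string y ∈ {0,1}^n, Δ_E(y, z) ≤ 2·Δ_E(y, w). -/
/-- Length of a longest common subsequence of two lists. -/
def lcsLen {α : Type*} [DecidableEq α] : List α → List α → ℕ
  | [], _ => 0
  | _ :: _, [] => 0
  | a :: x, b :: y =>
    if a = b then lcsLen x y + 1
    else max (lcsLen (a :: x) y) (lcsLen x (b :: y))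
termination_by x y => x.length + y.length

/-- Edit distance (insertions and deletions only). -/
def editDist {α : Type*} [DecidableEq α] (x y : List α) : ℕ :=
  x.length + y.length - 2 * lcsLen x y

lemma lcsLen_le {α : Type*} [DecidableEq α] : ∀ x y : List α,
    lcsLen x y ≤ x.length ∧ lcsLen x y ≤ y.length
  | [], y => by simp [lcsLen]
  | a :: x, [] => by simp [lcsLen]
  | a :: x, b :: y => by
    have h1 := lcsLen_le x y
    have h2 := lcsLen_le (a :: x) y
    have h3 := lcsLen_le x (b :: y)
    simp only [List.length_cons] at h1 h2 h3 ⊢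
    simp only [lcsLen, List.length_cons]
    split <;> [omega; (simp only [Nat.max_def]; split_ifs <;> omega)]
termination_by x y => x.length + y.length

lemma lcsLen_append_le {α : Type*} [DecidableEq α] : ∀ (x u v : List α),
    lcsLen x (u ++ v) ≤ lcsLen x u + v.length
  | [], u, v => by simp [lcsLen]
  | a :: x, [], v => by
    simpa [lcsLen] using (lcsLen_le (a :: x) v).2
  | a :: x, b :: u, v => by
    have h1 := lcsLen_append_le x u v
    have h2 := lcsLen_append_le (a :: x) u v
    have h3 := lcsLen_append_le x (b :: u) v
    simp only [List.cons_append, List.length_cons] at h1 h2 h3 ⊢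
    simp only [lcsLen, List.cons_append]
    split <;> [omega; (simp only [Nat.max_def]; split_ifs <;> omega)]
termination_by x u v => x.length + u.length

lemma le_lcsLen_append {α : Type*} [DecidableEq α] : ∀ (x u v : List α),
    lcsLen x u ≤ lcsLen x (u ++ v)
  | [], u, v => by simp [lcsLen]
  | a :: x, [], v => by simp [lcsLen]
  | a :: x, b :: u, v => by
    have h1 := le_lcsLen_append x u v
    have h2 := le_lcsLen_append (a :: x) u v
    have h3 := le_lcsLen_append x (b :: u) v
    simp only [List.cons_append, List.length_cons] at h1 h2 h3 ⊢
    simp only [lcsLen, List.cons_append]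
    split <;> [omega; (simp only [Nat.max_def]; split_ifs <;> omega)]
termination_by x u v => x.length + u.length

/-- Deterministic truncation (if `|w| > n`) or zero-padding (if `|w| ≤ n`) of a binary
string `w` to length `n` at most doubles its edit distance to any `y ∈ {0,1}ⁿ`:
`Δ_E(y, z) ≤ 2·Δ_E(y, w)`. -/
theorem truncate_pad_edit_dist (n : ℕ) (w : List Bool) (z : List Bool)
    (hz : z = if n < w.length then w.take n
              else w ++ List.replicate (n - w.length) false)
    (y : List Bool) (hy : y.length = n) :
    editDist y z ≤ 2 * editDist y w := by
  have hLw := lcsLen_le y w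
  unfold editDist
  split_ifs at hz with h
  · -- truncation
    have hw : w = w.take n ++ w.drop n := (List.take_append_drop n w).symm
    have key : lcsLen y w ≤ lcsLen y (w.take n) + (w.drop n).length := by
      calc lcsLen y w = lcsLen y (w.take n ++ w.drop n) := by rw [← hw]
        _ ≤ _ := lcsLen_append_le y _ _
    have hLz := lcsLen_le y z
    subst hz
    simp only [List.length_take, List.length_drop] at *
    omega
  · -- padding
    have key : lcsLen y w ≤ lcsLen y z := by
      rw [hz]; exact le_lcsLen_append y w _
    have hLz := lcsLen_le y z
    have hzl : z.length = n := by
      rw [hz]; simp; omega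
    omega
end

section
/- Fix a seed r and run the CGK decoding process on input a ∈ {0,1}^{1.5L}: maintain a pointer i starting at 1; at step t (for t = 1,…,1.5L), if i ≤ L and position x_i is unassigned, assign x_i := a_t and record π(i) := t; then advance i according to a rule depending only on r and the current value x_i. Then the map π, from the set K ⊆ [L] of assigned indices to [1.5L], is injective, and each x_j for j ∈ K equals a_{π(j)}. Consequently, if a is uniform on {0,1}^{1.5L} and unassigned positions of x are filled with fresh independent uniform bits, then x is uniform on {0,1}^L. -/
open Finset

/-- State of the CGK decoding process after `t` steps: the pointer (starting at `1`) and
the partial assignment of the output string (`none` = unassigned).  `L` is the output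
length, `adv t v` (derived from the seed `r`) tells whether the pointer advances at
step `t` when the current symbol is `v`, and `a` is the input string. -/
def cgkState (L : ℕ) (adv : ℕ → Bool → Bool) (a : ℕ → Bool) :
    ℕ → ℕ × (ℕ → Option Bool)
  | 0 => (1, fun _ => none)
  | t + 1 =>
    let s := cgkState L adv a t
    let i := s.1
    let x := s.2
    if i ≤ L then
      match x i with
      | none => (i + (if adv t (a t) then 1 else 0),
                 Function.update x i (some (a t)))
      | some v => (i + (if adv t v then 1 else 0), x)
    else (i, x)

/-!
Each output position is assigned only when the pointer first visits it, and receives the input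
bit read at that step; this gives the injective map `π`, the first-visit time.

For uniformity, exchange, for every step `t` at which the pointer first visits a position
`i ∈ [1, L]`, the input bit `a t` with the fill-in bit `y (i - 1)`. The second component of the
result is the decoder's output `x`. The exchange is undone by the same exchange along the
trajectory recomputed from `x` alone, since the pointer only ever reads the values that end up
in `x`. So the output is the second marginal of a uniformly random pair composed with a bijection.
-/

section FirstVisit

variable {α : Type*} {p q : ℕ → α} {j : α} {s t : ℕ}

noncomputable def firstVisit (p : ℕ → α) (j : α) : ℕ := sInf {s | p s = j}

lemma firstVisit_le (h : p s = j) : firstVisit p j ≤ s := Nat.sInf_le h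

variable [DecidableEq α]

lemma apply_firstVisit_of_mem (h : j ∈ (range t).image p) :
    p (firstVisit p j) = j ∧ firstVisit p j < t := by
  obtain ⟨s, hs, rfl⟩ := mem_image.1 h
  exact ⟨Nat.sInf_mem (s := {s' | p s' = p s}) ⟨s, rfl⟩,
    (firstVisit_le rfl).trans_lt (mem_range.1 hs)⟩

lemma firstVisit_apply_of_notMem (h : p t ∉ (range t).image p) : firstVisit p (p t) = t := by
  refine (firstVisit_le rfl).antisymm (not_lt.1 fun hlt => h ?_)
  have := apply_firstVisit_of_mem (p := p) (t := t + 1) (mem_image_of_mem p (self_mem_range_succ t))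
  exact mem_image.2 ⟨_, mem_range.2 hlt, this.1⟩

lemma firstVisit_congr (hpq : ∀ s < t, p s = q s) (h : j ∈ (range t).image p) :
    firstVisit p j = firstVisit q j := by
  obtain ⟨hp, hpt⟩ := apply_firstVisit_of_mem h
  have hq : q (firstVisit q j) = j := Nat.sInf_mem (s := {s | q s = j}) ⟨_, (hpq _ hpt).symm.trans hp⟩
  have hle : firstVisit q j ≤ firstVisit p j := firstVisit_le ((hpq _ hpt).symm.trans hp)
  exact (firstVisit_le ((hpq _ (hle.trans_lt hpt)).trans hq)).antisymm hle

end FirstVisit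

lemma PMF.map_equiv_uniformOfFintype {α β : Type*} [Fintype α] [Nonempty α] [Fintype β]
    [Nonempty β] (e : α ≃ β) : PMF.map e (PMF.uniformOfFintype α) = PMF.uniformOfFintype β := by
  ext b
  rw [PMF.map_apply, tsum_eq_single (e.symm b) fun a ha => if_neg fun h => ha (by simp [h])]
  simp [Fintype.card_congr e]

open scoped ENNReal in
lemma PMF.map_snd_uniformOfFintype_prod {α β : Type*} [Fintype α] [Nonempty α] [Fintype β]
    [Nonempty β] :
    PMF.map Prod.snd (PMF.uniformOfFintype (α × β)) = PMF.uniformOfFintype β := by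
  classical
  ext b
  have hα : (Fintype.card α : ℝ≥0∞) ≠ 0 := by simp
  simp only [PMF.map_apply, tsum_fintype, Fintype.sum_prod_type, PMF.uniformOfFintype_apply]
  simp [ENNReal.mul_inv (Or.inl hα) (Or.inl (ENNReal.natCast_ne_top _)), ← mul_assoc,
    ENNReal.mul_inv_cancel hα (ENNReal.natCast_ne_top _)]

namespace CGK

variable {L m : ℕ} {adv : ℕ → Bool → Bool}

variable (L adv) in
def move (t i : ℕ) (v : Bool) : ℕ :=
  if i ≤ L then i + (if adv t v then 1 else 0) else i

lemma le_move (t i : ℕ) (v : Bool) : i ≤ move L adv t i v := by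
  unfold move
  split <;> omega

variable (L adv) in
def pointer (a : ℕ → Bool) (t : ℕ) : ℕ := (cgkState L adv a t).1

lemma cgkState_succ (a : ℕ → Bool) (t : ℕ) :
    cgkState L adv a (t + 1) =
      let i := (cgkState L adv a t).1
      let x := (cgkState L adv a t).2
      (move L adv t i ((x i).getD (a t)),
        if i ≤ L ∧ x i = none then Function.update x i (some (a t)) else x) := by
  simp only [cgkState, move]
  split
  · rcases (cgkState L adv a t).2 (cgkState L adv a t).1 with _ | v <;> simp [*]
  · simp [*]

theorem cgkState_snd_eq (a : ℕ → Bool) (t j : ℕ) :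
    (cgkState L adv a t).2 j =
      if j ∈ (range t).image (pointer L adv a) ∧ j ≤ L then
        some (a (firstVisit (pointer L adv a) j))
      else none := by
  induction t generalizing j with
  | zero => simp [cgkState]
  | succ t ih =>
    set p := pointer L adv a
    rw [cgkState_succ]
    simp only [show (cgkState L adv a t).1 = p t from rfl, range_add_one, image_insert, mem_insert]
    by_cases hfresh : p t ≤ L ∧ p t ∉ (range t).image p
    · rw [if_pos ⟨hfresh.1, by rw [ih, if_neg fun h => hfresh.2 h.1]⟩]
      by_cases hj : j = p t
      · subst hj
        simp [firstVisit_apply_of_notMem hfresh.2, hfresh.1]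
      · rw [Function.update_of_ne hj, ih]
        simp [hj]
    · have hstays : ¬(p t ≤ L ∧ (cgkState L adv a t).2 (p t) = none) := by
        rintro ⟨hL, hnone⟩
        rw [ih, if_pos ⟨not_not.1 fun hv => hfresh ⟨hL, hv⟩, hL⟩] at hnone
        exact Option.some_ne_none _ hnone
      rw [if_neg hstays, ih]
      congr 1
      refine propext (and_congr_left fun hL => ⟨Or.inr, ?_⟩)
      rintro (rfl | hv)
      · exact not_not.1 fun hv => hfresh ⟨hL, hv⟩
      · exact hv

lemma pointer_succ (a : ℕ → Bool) (t : ℕ) :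
    pointer L adv a (t + 1) =
      move L adv t (pointer L adv a t) (a (firstVisit (pointer L adv a) (pointer L adv a t))) := by
  set p := pointer L adv a
  change (cgkState L adv a (t + 1)).1 = _
  rw [cgkState_succ]
  simp only [show (cgkState L adv a t).1 = p t from rfl, cgkState_snd_eq]
  by_cases hL : p t ≤ L
  · by_cases hv : p t ∈ (range t).image p
    · rw [if_pos ⟨hv, hL⟩]
      rfl
    · rw [if_neg fun h => hv h.1, firstVisit_apply_of_notMem hv]
      rfl
  · simp only [move, if_neg hL]

theorem exists_injOn_assignment (a : ℕ → Bool) :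
    ∃ π : ℕ → ℕ,
      Set.InjOn π {j | ((cgkState L adv a m).2 j).isSome} ∧
      ∀ j, ((cgkState L adv a m).2 j).isSome →
        π j < m ∧ (cgkState L adv a m).2 j = some (a (π j)) := by
  have hvisited : ∀ j, ((cgkState L adv a m).2 j).isSome →
      j ∈ (range m).image (pointer L adv a) ∧ j ≤ L := by
    intro j hj
    rw [cgkState_snd_eq] at hj
    split_ifs at hj with h
    · exact h
    · simp at hj
  refine ⟨firstVisit (pointer L adv a), fun j hj j' hj' h => ?_, fun j hj => ?_⟩
  · rw [← (apply_firstVisit_of_mem (hvisited j hj).1).1, h,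
      (apply_firstVisit_of_mem (hvisited j' hj').1).1]
  · exact ⟨(apply_firstVisit_of_mem (hvisited j hj).1).2,
      by rw [cgkState_snd_eq, if_pos (hvisited j hj)]⟩

variable (L adv) in
/-- The pointer trajectory when the symbol read at every position `i` is `Y i`. -/
def drivenPointer (Y : ℕ → Bool) : ℕ → ℕ
  | 0 => 1
  | t + 1 => move L adv t (drivenPointer Y t) (Y (drivenPointer Y t))

lemma one_le_drivenPointer (Y : ℕ → Bool) (t : ℕ) : 1 ≤ drivenPointer L adv Y t := by
  induction t with
  | zero => rfl
  | succ t ih => exact ih.trans (le_move ..)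

lemma one_le_pointer (a : ℕ → Bool) (t : ℕ) : 1 ≤ pointer L adv a t := by
  induction t with
  | zero => rfl
  | succ t ih => exact ih.trans (pointer_succ a t ▸ le_move ..)

theorem pointer_eq_drivenPointer {a Y : ℕ → Bool}
    (h : ∀ u < m, (∀ s ≤ u, pointer L adv a s = drivenPointer L adv Y s) →
      pointer L adv a u ≤ L →
      a (firstVisit (pointer L adv a) (pointer L adv a u)) = Y (pointer L adv a u)) :
    ∀ u ≤ m, pointer L adv a u = drivenPointer L adv Y u := by
  intro u
  induction u using Nat.strong_induction_on with
  | _ u ih =>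
    intro hu
    rcases u with _ | u
    · rfl
    have hprev : ∀ s ≤ u, pointer L adv a s = drivenPointer L adv Y s :=
      fun s hs => ih s (by omega) (by omega)
    rw [pointer_succ, drivenPointer, ← hprev u le_rfl]
    by_cases hL : pointer L adv a u ≤ L
    · rw [h u (by omega) hprev hL]
    · simp only [move, if_neg hL]

/-- Exchanges the input bit of each step `t` at which `q` first visits a position `q t ∈ [1, L]`
with the fill-in bit at that (1-based) position. -/
noncomputable def swapAlong (q : ℕ → ℕ) (u : (Fin m → Bool) × (Fin L → Bool)) :
    (Fin m → Bool) × (Fin L → Bool) :=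
  (fun t => if h : 1 ≤ q t ∧ q t ≤ L ∧ firstVisit q (q t) = t then u.2 ⟨q t - 1, by omega⟩
    else u.1 t,
   fun j => if h : j.1 + 1 ∈ (range m).image q then
      u.1 ⟨firstVisit q (j.1 + 1), (apply_firstVisit_of_mem h).2⟩
    else u.2 j)

theorem swapAlong_swapAlong (q : ℕ → ℕ) (u : (Fin m → Bool) × (Fin L → Bool)) :
    swapAlong q (swapAlong q u) = u := by
  ext t
  · simp only [swapAlong]
    split_ifs with hfresh hvisited
    · simp [Nat.sub_add_cancel hfresh.1, hfresh.2.2]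
    · rw [Nat.sub_add_cancel hfresh.1] at hvisited
      exact absurd (mem_image_of_mem q (mem_range.2 t.2)) hvisited
    · rfl
  · simp only [swapAlong]
    split_ifs with hvisited hfresh
    · simp [(apply_firstVisit_of_mem hvisited).1]
    · obtain ⟨hq, -⟩ := apply_firstVisit_of_mem hvisited
      exact absurd ⟨by omega, by omega, by rw [hq]⟩ hfresh
    · rfl

theorem swapAlong_congr {q q' : ℕ → ℕ} (h : ∀ t < m, q t = q' t)
    (u : (Fin m → Bool) × (Fin L → Bool)) : swapAlong q u = swapAlong q' u := by
  have himage : (range m).image q = (range m).image q' :=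
    image_congr fun t ht => h t (mem_range.1 ht)
  ext t
  · have hfv := firstVisit_congr h (mem_image_of_mem q (mem_range.2 t.2))
    rw [h t t.2] at hfv
    simp only [swapAlong, h t t.2, hfv]
  · simp only [swapAlong, himage]
    split_ifs with hv
    · exact congrArg u.1 (Fin.ext (firstVisit_congr h (himage ▸ hv)))
    · rfl

def inputSeq (c : Fin m → Bool) (t : ℕ) : Bool := if h : t < m then c ⟨t, h⟩ else false

def outputSeq (y : Fin L → Bool) (i : ℕ) : Bool := if h : i - 1 < L then y ⟨i - 1, h⟩ else false

variable (L adv) in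
noncomputable def decodeSwap (u : (Fin m → Bool) × (Fin L → Bool)) :
    (Fin m → Bool) × (Fin L → Bool) :=
  swapAlong (pointer L adv (inputSeq u.1)) u

theorem decodeSwap_snd (u : (Fin m → Bool) × (Fin L → Bool)) (j : Fin L) :
    (decodeSwap L adv u).2 j =
      ((cgkState L adv (inputSeq u.1) m).2 (j.1 + 1)).getD (u.2 j) := by
  simp only [decodeSwap, swapAlong, cgkState_snd_eq, show j.1 + 1 ≤ L from j.2, and_true]
  split_ifs with hv
  · simp [inputSeq, (apply_firstVisit_of_mem hv).2]
  · rfl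

theorem pointer_eq_drivenPointer_decodeSwap (u : (Fin m → Bool) × (Fin L → Bool)) :
    ∀ t ≤ m, pointer L adv (inputSeq u.1) t =
      drivenPointer L adv (outputSeq (decodeSwap L adv u).2) t := by
  refine pointer_eq_drivenPointer fun t ht _ hL => ?_
  have h1 := one_le_pointer (L := L) (adv := adv) (inputSeq u.1) t
  rw [outputSeq, dif_pos (by omega), decodeSwap_snd, Nat.sub_add_cancel h1, cgkState_snd_eq,
    if_pos ⟨mem_image_of_mem _ (mem_range.2 ht), hL⟩]
  rfl

theorem pointer_swapAlong_eq_drivenPointer (v : (Fin m → Bool) × (Fin L → Bool)) :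
    ∀ t ≤ m, pointer L adv (inputSeq (swapAlong (drivenPointer L adv (outputSeq v.2)) v).1) t =
      drivenPointer L adv (outputSeq v.2) t := by
  set q := drivenPointer L adv (outputSeq v.2)
  refine pointer_eq_drivenPointer fun t ht hagree hL => ?_
  change ∀ s ≤ t, _ = q s at hagree
  rw [hagree t le_rfl] at hL ⊢
  have hvisit : q t ∈ (range (t + 1)).image (pointer L adv (inputSeq (swapAlong q v).1)) := by
    rw [← hagree t le_rfl]
    exact mem_image_of_mem _ (self_mem_range_succ t)
  rw [firstVisit_congr (fun s hs => hagree s (by omega)) hvisit]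
  obtain ⟨hfirst, hlt⟩ := apply_firstVisit_of_mem (mem_image_of_mem q (self_mem_range_succ t))
  set f := firstVisit q (q t)
  have hfresh : 1 ≤ q f ∧ q f ≤ L ∧ firstVisit q (q f) = f := by
    rw [hfirst]
    exact ⟨one_le_drivenPointer _ t, hL, rfl⟩
  rw [inputSeq, dif_pos (by omega)]
  simp only [swapAlong]
  rw [dif_pos hfresh, outputSeq, dif_pos (by omega)]
  simp only [hfirst]

variable (L m adv) in
noncomputable def decodeEquiv :
    (Fin m → Bool) × (Fin L → Bool) ≃ (Fin m → Bool) × (Fin L → Bool) where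
  toFun := decodeSwap L adv
  invFun v := swapAlong (drivenPointer L adv (outputSeq v.2)) v
  left_inv u := by
    change swapAlong _ (decodeSwap L adv u) = u
    rw [← swapAlong_congr fun t ht => pointer_eq_drivenPointer_decodeSwap u t ht.le]
    exact swapAlong_swapAlong _ u
  right_inv v := by
    rw [decodeSwap, swapAlong_congr fun t ht => pointer_swapAlong_eq_drivenPointer v t ht.le]
    exact swapAlong_swapAlong _ v

end CGK

/-- The CGK decoding process run for `m` steps assigns each output index at most once,
at the step recorded by an injective map `π` into `[m]`, and the assigned value at
index `j` equals the input bit `a_{π(j)}`.  Consequently, if the input `a` is uniform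
on `{0,1}^m` and the unassigned output positions are filled with fresh independent
uniform bits, the output string (of length `L`, positions `1,…,L`) is uniform on
`{0,1}^L`. -/
theorem cgk_decoding_injective_and_uniform (L m : ℕ) (adv : ℕ → Bool → Bool) :
    (∀ a : ℕ → Bool, ∃ π : ℕ → ℕ,
      Set.InjOn π {j | ((cgkState L adv a m).2 j).isSome} ∧
      ∀ j, ((cgkState L adv a m).2 j).isSome →
        π j < m ∧ (cgkState L adv a m).2 j = some (a (π j))) ∧
    PMF.map
        (fun p : (Fin m → Bool) × (Fin L → Bool) =>
          fun j : Fin L =>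
            ((cgkState L adv
                (fun t => if h : t < m then p.1 ⟨t, h⟩ else false) m).2
              (j.1 + 1)).getD (p.2 j))
        (PMF.uniformOfFintype ((Fin m → Bool) × (Fin L → Bool)))
      = PMF.uniformOfFintype (Fin L → Bool) :=
  ⟨CGK.exists_injOn_assignment,
    calc _ = PMF.map (Prod.snd ∘ CGK.decodeEquiv L m adv) (PMF.uniformOfFintype _) :=
          congrArg (PMF.map · _) (funext fun p => funext fun j => (CGK.decodeSwap_snd p j).symm)
      _ = _ := by
        rw [← PMF.map_comp, PMF.map_equiv_uniformOfFintype, PMF.map_snd_uniformOfFintype_prod]⟩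
end

section
/- Let S be a uniformly random string in Σ^n with |Σ| ≥ e³/ε² for some ε ∈ (0,1). Then S is ε-self-matching with probability at least 1 - (e²/(ε²|Σ|))^{nε} ≥ 1 - e^{-nε}. -/
open Finset
open scoped Classical

/-- A string `S ∈ Σⁿ` is `ε`-self-matching if every monotone matching between `S` and
itself (two strictly increasing sequences of positions `a, b` with `S_{aᵢ} = S_{bᵢ}`)
contains at most `ε·n` pairs with `aᵢ ≠ bᵢ`. -/
def IsSelfMatching {α : Type*} {n : ℕ} (ε : ℝ) (S : Fin n → α) : Prop :=
  ∀ (k : ℕ) (a b : Fin k → Fin n), StrictMono a → StrictMono b →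
    (∀ i, S (a i) = S (b i)) →
    ((Finset.univ.filter (fun i : Fin k => a i ≠ b i)).card : ℝ) ≤ ε * n

/-!
A string that is not `ε`-self-matching contains a matching with `m = ⌊εn⌋ + 1` pairs, all with
`aᵢ ≠ bᵢ`. There are at most `C(n, m)²` such pairs of position sequences, and each is respected by
at most `|Σ|^(n - m)` strings: the letter at `max aᵢ bᵢ` is copied from the earlier position
`min aᵢ bᵢ`, so such a string is determined by its letters off these `m` positions. Since
`C(n, m) ≤ (en/m)^m ≤ (e/ε)^m`, the proportion of bad strings is at most
`(e²/(ε²|Σ|))^m ≤ (e²/(ε²|Σ|))^(nε)`, and `e²/(ε²|Σ|) ≤ 1/e`.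
-/

theorem card_strictMono_le_choose (m n : ℕ) :
    #{f : Fin m → Fin n | StrictMono f} ≤ n.choose m := by
  calc #{f : Fin m → Fin n | StrictMono f}
      ≤ #(powersetCard m (univ : Finset (Fin n))) := by
        refine card_le_card_of_injOn (fun f => image f univ) (fun f hf => ?_) ?_
        · simp only [coe_filter, mem_univ, true_and, Set.mem_ofPred_eq] at hf
          simp [mem_powersetCard, card_image_of_injective _ hf.injective]
        · intro f hf g hg hfg
          simp only [coe_filter, mem_univ, true_and, Set.mem_ofPred_eq] at hf hg
          refine (hf.range_inj hg).1 ?_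
          simpa using congrArg ((↑) : Finset (Fin n) → Set (Fin n)) hfg
    _ = n.choose m := by simp

theorem eq_of_eqOn_compl_range_max {ι κ β : Type*} [LinearOrder ι] [WellFoundedLT ι]
    {a b : κ → ι} (hab : ∀ i, a i ≠ b i) {S S' : ι → β} (hS : ∀ i, S (a i) = S (b i))
    (hS' : ∀ i, S' (a i) = S' (b i))
    (h : Set.EqOn S S' (Set.range fun i => max (a i) (b i))ᶜ) : S = S' := by
  have max_eq_min {T : ι → β} (hT : ∀ i, T (a i) = T (b i)) (i : κ) :
      T (max (a i) (b i)) = T (min (a i) (b i)) := by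
    rcases le_total (a i) (b i) with hi | hi <;> simp [hi, hT i]
  funext p
  induction p using WellFoundedLT.induction with
  | ind p ih =>
    by_cases hp : p ∈ Set.range fun i => max (a i) (b i)
    · obtain ⟨i, rfl⟩ := hp
      rw [max_eq_min hS, max_eq_min hS', ih _ (min_lt_max.2 (hab i))]
    · exact h hp

theorem card_filter_forall_eq_mul_pow_le {α : Type*} [Fintype α] {m n : ℕ}
    {a b : Fin m → Fin n} (ha : StrictMono a) (hb : StrictMono b) (hab : ∀ i, a i ≠ b i) :
    #{S : Fin n → α | ∀ i, S (a i) = S (b i)} * Fintype.card α ^ m ≤ Fintype.card α ^ n := by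
  set c : Fin m → Fin n := fun i => max (a i) (b i)
  have hc : StrictMono c := fun i j hij => max_lt_max (ha hij) (hb hij)
  set T : Finset (Fin n) := image c univ
  have hT : #T = m := by simp [T, card_image_of_injective _ hc.injective]
  have hmn : m ≤ n := by simpa [hT] using card_le_univ T
  have hrestrict : #{S : Fin n → α | ∀ i, S (a i) = S (b i)} ≤ Fintype.card α ^ (n - m) := by
    calc #{S : Fin n → α | ∀ i, S (a i) = S (b i)}
        ≤ #(univ : Finset ({p // p ∉ T} → α)) := by
          refine card_le_card_of_injOn (fun S p => S p) (fun _ _ => mem_coe.2 (mem_univ _)) ?_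
          intro S hS S' hS' hSS'
          simp only [coe_filter, mem_univ, true_and, Set.mem_ofPred_eq] at hS hS'
          refine eq_of_eqOn_compl_range_max hab hS hS' fun p hp => ?_
          exact congrFun hSS' ⟨p, by simpa [T] using hp⟩
      _ = Fintype.card α ^ (n - m) := by
          simp [Fintype.card_subtype_compl, hT]
  calc _ ≤ Fintype.card α ^ (n - m) * Fintype.card α ^ m := Nat.mul_le_mul_right _ hrestrict
    _ = Fintype.card α ^ n := by rw [← pow_add, Nat.sub_add_cancel hmn]

theorem exists_strictMono_of_not_isSelfMatching {α : Type*} {n : ℕ} {ε : ℝ} (hε : 0 ≤ ε)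
    {S : Fin n → α} (hS : ¬ IsSelfMatching ε S) :
    ∃ a b : Fin (⌊ε * n⌋₊ + 1) → Fin n, StrictMono a ∧ StrictMono b ∧
      (∀ i, a i ≠ b i) ∧ ∀ i, S (a i) = S (b i) := by
  simp only [IsSelfMatching, not_forall, not_le] at hS
  obtain ⟨k, a, b, ha, hb, hS, hcard⟩ := hS
  set F := univ.filter fun i : Fin k => a i ≠ b i
  have hF : ⌊ε * n⌋₊ + 1 ≤ #F := (Nat.floor_lt (by positivity)).2 hcard
  set g := F.orderEmbOfCardLe hF
  have hgF (i) : g i ∈ F := F.orderEmbOfCardLe_mem hF i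
  exact ⟨a ∘ g, b ∘ g, ha.comp g.strictMono, hb.comp g.strictMono,
    fun i => (mem_filter.1 (hgF i)).2, fun i => hS (g i)⟩

theorem card_not_isSelfMatching_mul_pow_le {α : Type*} [Fintype α] (n : ℕ) {ε : ℝ}
    (hε : 0 ≤ ε) :
    #{S : Fin n → α | ¬ IsSelfMatching ε S} * Fintype.card α ^ (⌊ε * n⌋₊ + 1)
      ≤ n.choose (⌊ε * n⌋₊ + 1) ^ 2 * Fintype.card α ^ n := by
  set m := ⌊ε * n⌋₊ + 1
  set M : Finset ((Fin m → Fin n) × (Fin m → Fin n)) :=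
    {p | StrictMono p.1 ∧ StrictMono p.2 ∧ ∀ i, p.1 i ≠ p.2 i}
  have hbad : ({S | ¬ IsSelfMatching ε S} : Finset (Fin n → α))
      ⊆ M.biUnion fun p => {S | ∀ i, S (p.1 i) = S (p.2 i)} := by
    intro S hS
    obtain ⟨a, b, ha, hb, hab, hS⟩ :=
      exists_strictMono_of_not_isSelfMatching hε (mem_filter.1 hS).2
    exact mem_biUnion.2 ⟨(a, b), by simp [M, ha, hb, hab], by simp [hS]⟩
  have hM : #M ≤ n.choose m ^ 2 := by
    let SM : Finset (Fin m → Fin n) := {f | StrictMono f}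
    calc #M ≤ #(SM ×ˢ SM) :=
          card_le_card fun p hp => by simp_all [M, SM]
      _ ≤ n.choose m ^ 2 := by
          rw [card_product, ← sq]
          exact Nat.pow_le_pow_left (card_strictMono_le_choose m n) 2
  calc _ ≤ (∑ p ∈ M, #{S : Fin n → α | ∀ i, S (p.1 i) = S (p.2 i)}) * Fintype.card α ^ m :=
        Nat.mul_le_mul_right _ ((card_le_card hbad).trans card_biUnion_le)
    _ ≤ #M * Fintype.card α ^ n := by
        rw [sum_mul]
        refine sum_le_card_nsmul _ _ _ fun p hp => ?_
        simp only [M, mem_filter, mem_univ, true_and] at hp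
        exact card_filter_forall_eq_mul_pow_le hp.1 hp.2.1 hp.2.2
    _ ≤ n.choose m ^ 2 * Fintype.card α ^ n := Nat.mul_le_mul_right _ hM

theorem Nat.choose_le_exp_mul_div_pow (n m : ℕ) :
    (n.choose m : ℝ) ≤ (Real.exp 1 * n / m) ^ m := by
  have hfact : (0 : ℝ) < m.factorial := by exact_mod_cast m.factorial_pos
  have hm : (0 : ℝ) < (m : ℝ) ^ m := by
    rcases m.eq_zero_or_pos with rfl | hm
    · simp
    · positivity
  have hexp : (m : ℝ) ^ m ≤ Real.exp 1 ^ m * m.factorial := by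
    rw [← Real.exp_nat_mul, mul_one, ← div_le_iff₀ hfact]
    exact Real.pow_div_factorial_le_exp (x := m) (Nat.cast_nonneg m) m
  calc (n.choose m : ℝ) ≤ (n : ℝ) ^ m / m.factorial := Nat.choose_le_pow_div m n
    _ ≤ (Real.exp 1 * n / m) ^ m := by
        rw [div_pow, mul_pow, div_le_div_iff₀ hfact hm]
        nlinarith [pow_nonneg (Nat.cast_nonneg n : (0 : ℝ) ≤ n) m]

theorem choose_sq_div_pow_le {n m : ℕ} {ε x : ℝ} (hε : 0 < ε) (hx : 0 < x) (hm : ε * n < m) :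
    (n.choose m : ℝ) ^ 2 / x ^ m ≤ (Real.exp 2 / (ε ^ 2 * x)) ^ m := by
  have hnm : Real.exp 1 * n / m ≤ Real.exp 1 / ε := by
    rw [div_le_div_iff₀ ((by positivity : (0 : ℝ) ≤ ε * n).trans_lt hm) hε]
    nlinarith [Real.exp_pos 1]
  calc (n.choose m : ℝ) ^ 2 / x ^ m ≤ ((Real.exp 1 / ε) ^ m) ^ 2 / x ^ m := by
        gcongr
        exact (Nat.choose_le_exp_mul_div_pow n m).trans (pow_le_pow_left₀ (by positivity) hnm m)
    _ = (Real.exp 2 / (ε ^ 2 * x)) ^ m := by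
        rw [show Real.exp 2 = Real.exp 1 ^ 2 by rw [← Real.exp_nat_mul]; norm_num]
        rw [← pow_mul, mul_comm m 2, pow_mul, ← div_pow, div_pow (Real.exp 1), div_div]

theorem card_not_isSelfMatching_div_pow_le {α : Type*} [Fintype α] [Nonempty α] (n : ℕ)
    {ε : ℝ} (hε : 0 < ε) :
    (#{S : Fin n → α | ¬ IsSelfMatching ε S} : ℝ) / Fintype.card α ^ n
      ≤ (Real.exp 2 / (ε ^ 2 * Fintype.card α)) ^ (⌊ε * n⌋₊ + 1) := by
  have hq : (0 : ℝ) < Fintype.card α := by exact_mod_cast Fintype.card_pos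
  calc _ ≤ (n.choose (⌊ε * n⌋₊ + 1) : ℝ) ^ 2 / Fintype.card α ^ (⌊ε * n⌋₊ + 1) := by
        rw [div_le_div_iff₀ (by positivity) (by positivity)]
        exact_mod_cast card_not_isSelfMatching_mul_pow_le n hε.le
    _ ≤ _ := choose_sq_div_pow_le hε hq (by exact_mod_cast Nat.lt_floor_add_one (ε * n))

theorem exp_two_div_le_exp_neg_one {ε x : ℝ} (hε : 0 < ε) (hx : Real.exp 3 / ε ^ 2 ≤ x) :
    Real.exp 2 / (ε ^ 2 * x) ≤ Real.exp (-1) := by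
  calc Real.exp 2 / (ε ^ 2 * x) ≤ Real.exp 2 / Real.exp 3 := by
        refine div_le_div_of_nonneg_left (Real.exp_pos 2).le (Real.exp_pos 3) ?_
        rwa [div_le_iff₀ (by positivity), mul_comm] at hx
    _ = Real.exp (-1) := by rw [← Real.exp_sub]; norm_num

theorem random_string_self_matching_general {α : Type*} [Fintype α]
    (q : ℕ) (hq : q = Fintype.card α) (n : ℕ)
    (ε : ℝ) (hε : ε ∈ Set.Ioo (0 : ℝ) 1)
    (hbig : Real.exp 3 / ε ^ 2 ≤ (q : ℝ)) :
    (1 : ℝ) - (Real.exp 2 / (ε ^ 2 * q)) ^ ((n : ℝ) * ε)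
        ≤ ((Finset.univ.filter
              (fun S : Fin n → α => IsSelfMatching ε S)).card : ℝ) / (q : ℝ) ^ n ∧
      (Real.exp 2 / (ε ^ 2 * q)) ^ ((n : ℝ) * ε) ≤ Real.exp (-((n : ℝ) * ε)) := by
  obtain ⟨hε0, -⟩ := hε
  subst hq
  have hq0 : (0 : ℝ) < Fintype.card α := (by positivity : 0 < Real.exp 3 / ε ^ 2).trans_le hbig
  have : Nonempty α := Fintype.card_pos_iff.1 (by exact_mod_cast hq0)
  set y := Real.exp 2 / (ε ^ 2 * Fintype.card α)
  have hy0 : 0 < y := by positivity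
  have hy1 : y ≤ Real.exp (-1) := exp_two_div_le_exp_neg_one hε0 hbig
  have hbad : (#{S : Fin n → α | ¬ IsSelfMatching ε S} : ℝ) / Fintype.card α ^ n
      ≤ y ^ ((n : ℝ) * ε) := by
    refine (card_not_isSelfMatching_div_pow_le n hε0).trans ?_
    rw [← Real.rpow_natCast]
    refine Real.rpow_le_rpow_of_exponent_ge hy0 (hy1.trans (by simp)) ?_
    push_cast
    linarith [Nat.lt_floor_add_one (ε * n)]
  have hsplit : (#{S : Fin n → α | IsSelfMatching ε S} : ℝ)
      + #{S : Fin n → α | ¬ IsSelfMatching ε S} = Fintype.card α ^ n := by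
    exact_mod_cast (card_filter_add_card_filter_not _).trans (by simp)
  constructor
  · rw [eq_sub_of_add_eq hsplit, sub_div, div_self (by positivity)]
    linarith
  · calc y ^ ((n : ℝ) * ε) ≤ Real.exp (-1) ^ ((n : ℝ) * ε) :=
          Real.rpow_le_rpow hy0.le hy1 (by positivity)
      _ = Real.exp (-((n : ℝ) * ε)) := by rw [← Real.exp_mul, neg_one_mul]

/-- A uniformly random string `S ∈ Σⁿ` over an alphabet of size `q ≥ e³/ε²` is
`ε`-self-matching with probability at least `1 - (e²/(ε²q))^{nε} ≥ 1 - e^{-nε}`. -/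
theorem random_string_self_matching {α : Type*} [Fintype α] [DecidableEq α]
    (q : ℕ) (hq : q = Fintype.card α) (n : ℕ) (hn : 0 < n)
    (ε : ℝ) (hε : ε ∈ Set.Ioo (0 : ℝ) 1)
    (hbig : Real.exp 3 / ε ^ 2 ≤ (q : ℝ)) :
    (1 : ℝ) - (Real.exp 2 / (ε ^ 2 * q)) ^ ((n : ℝ) * ε)
        ≤ ((Finset.univ.filter
              (fun S : Fin n → α => IsSelfMatching ε S)).card : ℝ) / (q : ℝ) ^ n ∧
      (Real.exp 2 / (ε ^ 2 * q)) ^ ((n : ℝ) * ε) ≤ Real.exp (-((n : ℝ) * ε)) :=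
  random_string_self_matching_general q hq n ε hε hbig
end

section
/- The number of monotone matchings of size k between positions [n] and [n] with all pairs off-diagonal is at most C(n,k)², and for a uniformly random string S ∈ Σ^n, the probability that any fixed monotone matching of size k with all pairs (a_i,b_i) satisfying a_i ≠ b_i is realized (i.e., S_{a_i} = S_{b_i} for all i) is at most |Σ|^{-⌈k/2⌉}. -/
open Finset
open scoped Classical

/-! A strictly monotone map `Fin k → Fin n` is determined by its range, a `k`-subset of `Fin n`,
so there are at most `C(n,k)` of them and at most `C(n,k)²` matchings.

For the probability, orient every pair of the matching: at least `⌈k/2⌉` pairs point the same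
way, say `aᵢ < bᵢ`. A string realizing these pairs is determined by its values off the
positions `bᵢ`, since the value at `bᵢ` is copied from the earlier position `aᵢ`. Hence at
most `|Σ|^(n - ⌈k/2⌉)` strings realize the matching. -/

theorem card_le_choose_of_forall_strictMono {ι β : Type*} [Fintype ι] [LinearOrder ι]
    [Fintype β] [Preorder β] {s : Finset (ι → β)} (hs : ∀ f ∈ s, StrictMono f) :
    #s ≤ (Fintype.card β).choose (Fintype.card ι) := by
  rw [← Finset.card_univ, ← Finset.card_powersetCard]
  refine Finset.card_le_card_of_injOn (fun f => Finset.univ.image f) (fun f hf => ?_) ?_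
  · simp [Finset.card_image_of_injective _ (hs f hf).injective]
  · intro f hf g hg hfg
    have hrange : Set.range f = Set.range g := by
      simpa [Set.image_univ] using congrArg (fun s : Finset β => (s : Set β)) hfg
    exact ((hs f hf).range_inj (hs g hg)).mp hrange

theorem card_le_choose_sq_of_forall_strictMono {ι β : Type*} [Fintype ι] [LinearOrder ι]
    [Fintype β] [Preorder β] {s : Finset ((ι → β) × (ι → β))}
    (hs : ∀ p ∈ s, StrictMono p.1 ∧ StrictMono p.2) :
    #s ≤ (Fintype.card β).choose (Fintype.card ι) ^ 2 := by
  have hfst := card_le_choose_of_forall_strictMono (s := s.image Prod.fst) fun f hf => by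
    obtain ⟨p, hp, rfl⟩ := Finset.mem_image.mp hf
    exact (hs p hp).1
  have hsnd := card_le_choose_of_forall_strictMono (s := s.image Prod.snd) fun f hf => by
    obtain ⟨p, hp, rfl⟩ := Finset.mem_image.mp hf
    exact (hs p hp).2
  calc #s ≤ #(s.image Prod.fst ×ˢ s.image Prod.snd) := Finset.card_le_card Finset.subset_product
    _ ≤ _ := by
      rw [Finset.card_product, sq]
      exact Nat.mul_le_mul hfst hsnd

section

variable {κ β α : Type*}

theorem eq_of_eqOn_compl_image [Preorder β] [WellFoundedLT β] {a b : κ → β} {T : Finset κ}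
    (hT : ∀ i ∈ T, a i < b i) {S S' : β → α}
    (hS : ∀ i ∈ T, S (a i) = S (b i)) (hS' : ∀ i ∈ T, S' (a i) = S' (b i))
    (hoff : Set.EqOn S S' (b '' T)ᶜ) : S = S' := by
  funext p
  induction p using WellFoundedLT.induction with
  | _ p ih =>
    by_cases hp : p ∈ T.image b
    · obtain ⟨i, hi, rfl⟩ := Finset.mem_image.mp hp
      rw [← hS i hi, ← hS' i hi, ih _ (hT i hi)]
    · exact hoff (by simpa using hp)

theorem card_le_pow_of_forall_eq_of_lt [Preorder β] [Fintype β] [Fintype α] {a b : κ → β}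
    {T : Finset κ} (hb : Set.InjOn b T) (hT : ∀ i ∈ T, a i < b i) {s : Finset (β → α)}
    (hs : ∀ S ∈ s, ∀ i ∈ T, S (a i) = S (b i)) :
    #s ≤ Fintype.card α ^ (Fintype.card β - #T) := by
  set B := T.image b
  calc #s ≤ Fintype.card ((Bᶜ : Finset β) → α) := by
        refine Finset.card_le_card_of_injOn (fun S p => S p) (fun _ _ => Finset.mem_coe.mpr
          (Finset.mem_univ _)) fun S hS S' hS' hSS' => ?_
        refine eq_of_eqOn_compl_image hT (hs S hS) (hs S' hS') fun p hp => ?_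
        exact congrFun hSS' ⟨p, by simpa [B] using hp⟩
    _ = Fintype.card α ^ (Fintype.card β - #T) := by
        rw [Fintype.card_fun, Fintype.card_coe, Finset.card_compl,
          Finset.card_image_of_injOn hb]

theorem card_le_pow_of_forall_eq_of_ne [LinearOrder β] [Fintype κ] [Fintype β] [Fintype α]
    [Nonempty α] {a b : κ → β} (ha : Function.Injective a) (hb : Function.Injective b)
    (hab : ∀ i, a i ≠ b i) {s : Finset (β → α)}
    (hs : ∀ S ∈ s, ∀ i, S (a i) = S (b i)) :
    #s ≤ Fintype.card α ^ (Fintype.card β - (Fintype.card κ + 1) / 2) := by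
  set T : Finset κ := {i | a i < b i}
  have hcard : #T + #Tᶜ = Fintype.card κ := Finset.card_add_card_compl T
  have hpow_le : ∀ t, (Fintype.card κ + 1) / 2 ≤ t →
      Fintype.card α ^ (Fintype.card β - t)
        ≤ Fintype.card α ^ (Fintype.card β - (Fintype.card κ + 1) / 2) := fun t ht =>
    Nat.pow_le_pow_right Fintype.card_pos (by omega)
  rcases le_or_gt ((Fintype.card κ + 1) / 2) #T with hT | hT
  · have hlt : ∀ i ∈ T, a i < b i := fun i hi => (Finset.mem_filter.mp hi).2
    exact (card_le_pow_of_forall_eq_of_lt hb.injOn hlt fun S hS i _ => hs S hS i).trans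
      (hpow_le _ hT)
  · have hgt : ∀ i ∈ Tᶜ, b i < a i := fun i hi =>
      (not_lt.mp fun h => mem_compl.mp hi (mem_filter.mpr ⟨mem_univ i, h⟩)).lt_of_ne
        (hab i).symm
    exact (card_le_pow_of_forall_eq_of_lt ha.injOn hgt fun S hS i _ => (hs S hS i).symm).trans
      (hpow_le _ (by omega))

end

theorem div_pow_le_zpow_neg {q x : ℝ} {n m : ℕ} {c : ℤ} (hq : 1 ≤ q) (hmn : m ≤ n)
    (hc : c ≤ m) (hx : x ≤ q ^ (n - m)) : x / q ^ n ≤ q ^ (-c) := by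
  have hq0 : q ≠ 0 := by positivity
  calc x / q ^ n ≤ q ^ (n - m) / q ^ n := by gcongr
    _ = q ^ (-(m : ℤ)) := by
        rw [pow_sub₀ q hq0 hmn, zpow_neg, zpow_natCast]
        field_simp
    _ ≤ q ^ (-c) := zpow_le_zpow_right₀ hq (neg_le_neg hc)

/-- (a) The number of monotone matchings of size `k` between `[n]` and `[n]` with all
pairs off-diagonal is at most `C(n,k)²`.
(b) For a uniformly random string `S ∈ Σⁿ`, any fixed monotone matching of size `k`
with `aᵢ ≠ bᵢ` for all `i` is realized (i.e., `S_{aᵢ} = S_{bᵢ}` for all `i`) with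
probability at most `|Σ|^{-⌈k/2⌉}`. -/
theorem matching_count_and_realization_prob {α : Type*} [Fintype α] [DecidableEq α]
    (q : ℕ) (hq : q = Fintype.card α) (hq2 : 2 ≤ q) (n k : ℕ) :
    (Finset.univ.filter
        (fun p : (Fin k → Fin n) × (Fin k → Fin n) =>
          StrictMono p.1 ∧ StrictMono p.2 ∧ ∀ i, p.1 i ≠ p.2 i)).card
      ≤ (Nat.choose n k) ^ 2 ∧
    ∀ a b : Fin k → Fin n, StrictMono a → StrictMono b → (∀ i, a i ≠ b i) →
      ((Finset.univ.filter
          (fun S : Fin n → α => ∀ i, S (a i) = S (b i))).card : ℝ) / (q : ℝ) ^ n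
        ≤ ((q : ℝ)) ^ (-((⌈(k : ℝ) / 2⌉ : ℤ))) := by
  refine ⟨?_, fun a b ha hb hab => ?_⟩
  · refine (card_le_choose_sq_of_forall_strictMono fun p hp => ?_).trans_eq (by simp)
    exact ⟨(Finset.mem_filter.mp hp).2.1, (Finset.mem_filter.mp hp).2.2.1⟩
  · have : Nonempty α := Fintype.card_pos_iff.mp (by omega)
    have hcount := card_le_pow_of_forall_eq_of_ne ha.injective hb.injective hab
      (s := Finset.univ.filter fun S : Fin n → α => ∀ i, S (a i) = S (b i))
      fun S hS => (Finset.mem_filter.mp hS).2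
    rw [Fintype.card_fin, Fintype.card_fin, ← hq] at hcount
    have hkn : k ≤ n := by simpa using Fintype.card_le_of_injective a ha.injective
    have hceil : ⌈(k : ℝ) / 2⌉ ≤ ((k + 1) / 2 : ℕ) := by
      rw [Int.ceil_le, Int.cast_natCast, div_le_iff₀ two_pos]
      exact_mod_cast (by omega : k ≤ (k + 1) / 2 * 2)
    exact div_pow_le_zpow_neg (by exact_mod_cast (by omega : 1 ≤ q)) (by omega) hceil
      (by exact_mod_cast hcount)
end
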